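/- arXiv:2206.04815 — 3 statements merged into one kernel-verified Lean document; each statement's English description precedes it below -/
import Mathlib

section
/- Let G = ([n], E) be a directed graph and S_G ≤ M(n, ℂ) its graphical matrix space. The maximum number of vertices of an acyclic induced subgraph of G equals the largest dimension of a subspace U ≤ ℂ^n such that the induced matrix space S_G[U] = { T_U B T_U* : B ∈ S_G } is nil, where T_U is a matrix whose rows form an orthonormal basis of U. -/
open Matrix

/-- The graphical matrix space of a directed graph with arc set `E ⊆ [n] × [n]`. -/
def graphSpace (F : Type*) [Field F] {n : ℕ} (E : Finset (Fin n × Fin n)) :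
    Submodule F (Matrix (Fin n) (Fin n) F) :=
  Submodule.span F ((fun e => Matrix.single e.1 e.2 (1 : F)) '' (E : Set (Fin n × Fin n)))

/-- The induced subgraph on the vertex set `V` has a cycle. -/
def HasCycleIn {n : ℕ} (E : Finset (Fin n × Fin n)) (V : Finset (Fin n)) : Prop :=
  ∃ (k : ℕ) (v : ℕ → Fin n), 0 < k ∧ v k = v 0 ∧
    (∀ i < k, v i ∈ V) ∧ (∀ i < k, (v i, v (i + 1)) ∈ E) ∧
    (∀ i < k, ∀ j < k, v i = v j → i = j)

/-!
If `V` induces an acyclic subgraph, compress to the span of the coordinate vectors of `V`: the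
compression of `B ∈ S_G` is the principal submatrix `B[V]`, and a nonzero entry of `B[V] ^ |V|`
would give a walk in `G[V]` with more steps than vertices, hence a cycle.

Conversely, if `T * Tᴴ = 1` with `T` of size `d × n`, then `T` has rank `d`, so some `d` columns
`t_j`, `j ∈ V`, are linearly independent. A cycle `v₀ → ⋯ → v₀` in `G[V]` gives
`B = ∑ E_{vₛ vₛ₊₁} ∈ S_G` with `T B Tᴴ = ∑ t_{vₛ} t_{vₛ₊₁}ᴴ`. Swapping the two factors of this
product preserves nilpotency and yields a row permutation of the Gram matrix of the independent
vectors `t_{vₛ}`, which is invertible: a contradiction. Hence the two sets of sizes coincide.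
-/

theorem apply_eq_zero_of_mem_graphSpace {F : Type*} [Field F] {n : ℕ}
    {E : Finset (Fin n × Fin n)} {B : Matrix (Fin n) (Fin n) F} (hB : B ∈ graphSpace F E)
    {i j : Fin n} (hij : (i, j) ∉ E) : B i j = 0 := by
  induction hB using Submodule.span_induction with
  | mem x hx =>
    obtain ⟨e, he, rfl⟩ := hx
    simp only [single_apply, ite_eq_right_iff, and_imp]
    rintro rfl rfl
    exact absurd he hij
  | zero => rfl
  | add x y _ _ hx hy => simp [hx, hy]
  | smul a x _ hx => simp [hx]

theorem Matrix.exists_walk_of_pow_apply_ne_zero {ι R : Type*} [Fintype ι] [DecidableEq ι]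
    [Semiring R] (M : Matrix ι ι R) {m : ℕ} {a b : ι} (h : (M ^ m) a b ≠ 0) :
    ∃ w : ℕ → ι, w 0 = a ∧ w m = b ∧ ∀ i < m, M (w i) (w (i + 1)) ≠ 0 := by
  induction m generalizing b with
  | zero =>
    obtain rfl : a = b := by
      by_contra hab
      exact h (by simp [one_apply_ne hab])
    exact ⟨fun _ => a, rfl, rfl, by omega⟩
  | succ m ih =>
    rw [pow_succ, mul_apply] at h
    obtain ⟨c, -, hc⟩ := Finset.exists_ne_zero_of_sum_ne_zero h
    obtain ⟨w, hw0, hwm, hw⟩ := ih (left_ne_zero_of_mul hc)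
    refine ⟨Function.update w (m + 1) b, by simpa using hw0, by simp, fun i hi => ?_⟩
    rw [Function.update_of_ne (by omega)]
    rcases Nat.lt_succ_iff_lt_or_eq.mp hi with hi | rfl
    · rw [Function.update_of_ne (by omega)]
      exact hw i hi
    · simpa [hwm] using right_ne_zero_of_mul hc

theorem hasCycleIn_of_closed_walk {n : ℕ} {E : Finset (Fin n × Fin n)} {V : Finset (Fin n)}
    {w : ℕ → Fin n} {p q : ℕ} (hpq : p < q) (hw : w p = w q)
    (hV : ∀ i, p ≤ i → i < q → w i ∈ V) (hE : ∀ i, p ≤ i → i < q → (w i, w (i + 1)) ∈ E) :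
    HasCycleIn E V := by
  classical
  -- a shortest closed subwalk visits no vertex twice
  have hex : ∃ L, ∃ p' q', p ≤ p' ∧ p' < q' ∧ q' ≤ q ∧ w p' = w q' ∧ q' - p' = L :=
    ⟨_, p, q, le_rfl, hpq, le_rfl, hw, rfl⟩
  obtain ⟨p', q', hp, hpq', hq, hw', hL⟩ := Nat.find_spec hex
  refine ⟨q' - p', fun i => w (p' + i), by omega,
    by simpa [Nat.add_sub_cancel' hpq'.le] using hw'.symm, fun i hi => hV _ (by omega) (by omega),
    fun i hi => by simpa [add_assoc] using hE (p' + i) (by omega) (by omega), ?_⟩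
  intro i hi j hj hij
  by_contra hne
  wlog hlt : i < j generalizing i j
  · exact this j hj i hi hij.symm (Ne.symm hne) (by omega)
  have := Nat.find_min' hex ⟨p' + i, p' + j, by omega, by omega, by omega, hij, rfl⟩
  omega

theorem isNilpotent_submatrix_of_not_hasCycleIn {R ι : Type*} [Semiring R] [Fintype ι]
    [DecidableEq ι] {n : ℕ} {E : Finset (Fin n × Fin n)} {V : Finset (Fin n)}
    (hV : ¬ HasCycleIn E V) {B : Matrix (Fin n) (Fin n) R} (hB : ∀ i j, B i j ≠ 0 → (i, j) ∈ E)
    (f : ι → Fin n) (hf : ∀ s, f s ∈ V) : IsNilpotent (B.submatrix f f) := by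
  refine ⟨Fintype.card ι, Matrix.ext fun a b => by_contra fun h => hV ?_⟩
  obtain ⟨w, -, -, hw⟩ := (B.submatrix f f).exists_walk_of_pow_apply_ne_zero h
  obtain ⟨x, y, hxy, hwxy⟩ :=
    Fintype.exists_ne_map_eq_of_card_lt (fun i : Fin (Fintype.card ι + 1) => w i) (by simp)
  wlog hlt : x < y generalizing x y
  · exact this y x hxy.symm hwxy.symm (lt_of_le_of_ne (not_lt.mp hlt) hxy.symm)
  exact hasCycleIn_of_closed_walk (w := f ∘ w) hlt (congrArg f hwxy) (fun i _ _ => hf _)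
    (fun i _ hi => hB _ _ (hw i (by omega)))

theorem Matrix.one_submatrix_mul_mul_conjTranspose {R ι κ : Type*} [Semiring R] [StarRing R]
    [Fintype ι] [DecidableEq ι] (f : κ → ι) (B : Matrix ι ι R) :
    (1 : Matrix ι ι R).submatrix f id * B * ((1 : Matrix ι ι R).submatrix f id)ᴴ =
      B.submatrix f f := by
  rw [conjTranspose_submatrix, conjTranspose_one, ← B.submatrix_id_id,
    ← submatrix_mul _ _ _ _ _ Function.bijective_id, Matrix.one_mul,
    ← submatrix_mul _ _ _ _ _ Function.bijective_id, Matrix.mul_one, submatrix_id_id]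

theorem exists_nil_compression_of_not_hasCycleIn {F : Type*} [Field F] [StarRing F] {n : ℕ}
    {E : Finset (Fin n × Fin n)} {V : Finset (Fin n)} (hV : ¬ HasCycleIn E V) :
    ∃ T : Matrix (Fin V.card) (Fin n) F, T * Tᴴ = 1 ∧
      ∀ B ∈ graphSpace F E, IsNilpotent (T * B * Tᴴ) := by
  let f : Fin V.card ↪ Fin n := (V.orderEmbOfFin rfl).toEmbedding
  refine ⟨(1 : Matrix (Fin n) (Fin n) F).submatrix f id, ?_, fun B hB => ?_⟩
  · simpa [submatrix_one_embedding] using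
      one_submatrix_mul_mul_conjTranspose f (1 : Matrix (Fin n) (Fin n) F)
  · rw [one_submatrix_mul_mul_conjTranspose]
    exact isNilpotent_submatrix_of_not_hasCycleIn hV
      (fun i j => not_imp_comm.mp (apply_eq_zero_of_mem_graphSpace hB))
      f (V.orderEmbOfFin_mem rfl)

theorem HasCycleIn.exists_fin {n : ℕ} {E : Finset (Fin n × Fin n)} {V : Finset (Fin n)}
    (h : HasCycleIn E V) : ∃ (k : ℕ) (c : Fin (k + 1) → Fin n),
      Function.Injective c ∧ (∀ s, c s ∈ V) ∧ ∀ s, (c s, c (s + 1)) ∈ E := by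
  obtain ⟨_, v, hk, hvk, hvV, hvE, hvinj⟩ := h
  obtain ⟨k, rfl⟩ := Nat.exists_eq_succ_of_ne_zero hk.ne'
  have hsucc (s : Fin (k + 1)) : v ((s + 1 : Fin (k + 1)) : ℕ) = v (s + 1) := by
    rw [Fin.val_add_one]
    split_ifs with hs
    · rw [hs, Fin.val_last, hvk]
    · rfl
  refine ⟨k, fun s => v s, fun s t hst => Fin.ext (hvinj _ s.isLt _ t.isLt hst),
    fun s => hvV _ s.isLt, fun s => ?_⟩
  simpa [hsucc] using hvE s s.isLt

theorem Matrix.isNilpotent_mul_comm {R m l : Type*} [Semiring R] [Fintype m] [DecidableEq m]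
    [Fintype l] [DecidableEq l] {X : Matrix m l R} {Y : Matrix l m R}
    (h : IsNilpotent (X * Y)) : IsNilpotent (Y * X) := by
  obtain ⟨k, hk⟩ := h
  refine ⟨k + 1, ?_⟩
  have hpow (j : ℕ) : (Y * X) ^ (j + 1) = Y * (X * Y) ^ j * X := by
    induction j with
    | zero => simp
    | succ j ih => rw [pow_succ, ih, pow_succ]; simp only [Matrix.mul_assoc]
  rw [hpow, hk, Matrix.mul_zero, Matrix.zero_mul]

theorem Matrix.exists_finset_linearIndepOn_col_card_eq_rank {K m ι : Type*} [Field K]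
    [Fintype ι] (A : Matrix m ι K) :
    ∃ V : Finset ι, LinearIndepOn K A.col (V : Set ι) ∧ V.card = A.rank := by
  classical
  obtain ⟨κ, a, ha, hspan, hli⟩ := exists_linearIndependent' K A.col
  have : Fintype κ := Fintype.ofInjective a ha
  refine ⟨(Set.range a).toFinset, by simpa using (linearIndepOn_range_iff ha _).2 hli, ?_⟩
  rw [rank_eq_finrank_span_cols, ← hspan, finrank_span_eq_card hli, Set.toFinset_card,
    Set.card_range_of_injective ha]

theorem Matrix.one_submatrix_mul_one_submatrix {R ι κ : Type*} [Semiring R] [Fintype ι]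
    [DecidableEq ι] [Fintype κ] (f g : κ → ι) :
    (1 : Matrix ι ι R).submatrix id f * (1 : Matrix ι ι R).submatrix g id =
      ∑ s, single (f s) (g s) 1 := by
  ext i j
  simp only [mul_apply, submatrix_apply, id, one_apply, sum_apply, single_apply]
  refine Finset.sum_congr rfl fun s _ => ?_
  by_cases h1 : i = f s <;> by_cases h2 : g s = j <;> simp [h1, h2, eq_comm]

open scoped ComplexOrder in
theorem Matrix.det_conjTranspose_mul_self_ne_zero {𝕜 m l : Type*} [RCLike 𝕜] [Fintype m]
    [Fintype l] [DecidableEq l] {K : Matrix m l 𝕜} (hK : LinearIndependent 𝕜 K.col) :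
    (Kᴴ * K).det ≠ 0 :=
  ((isUnit_iff_isUnit_det _).mp
    (PosDef.conjTranspose_mul_self K (mulVec_injective_iff.mpr hK)).isUnit).ne_zero

theorem not_hasCycleIn_of_linearIndepOn {𝕜 : Type*} [RCLike 𝕜] {n d : ℕ}
    {E : Finset (Fin n × Fin n)} {T : Matrix (Fin d) (Fin n) 𝕜}
    (hT : ∀ B ∈ graphSpace 𝕜 E, IsNilpotent (T * B * Tᴴ)) {V : Finset (Fin n)}
    (hV : LinearIndepOn 𝕜 T.col (V : Set (Fin n))) : ¬ HasCycleIn E V := by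
  intro hcyc
  obtain ⟨k, c, hc, hcV, hcE⟩ := hcyc.exists_fin
  set σ := Equiv.addRight (1 : Fin (k + 1))
  set K := T.submatrix id c
  have hK : LinearIndependent 𝕜 K.col :=
    hV.comp (fun s => ⟨c s, hcV s⟩) fun s t hst => hc (congrArg Subtype.val hst)
  have hB : (1 : Matrix (Fin n) (Fin n) 𝕜).submatrix id c *
      (1 : Matrix (Fin n) (Fin n) 𝕜).submatrix (c ∘ σ) id ∈ graphSpace 𝕜 E := by
    rw [one_submatrix_mul_one_submatrix]
    exact Submodule.sum_mem _ fun s _ => Submodule.subset_span ⟨_, hcE s, rfl⟩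
  -- the compression of the cycle matrix factors through `K`; swapping the factors leaves a
  -- cyclic row shift of the Gram matrix of the columns of `K`
  have hnil : IsNilpotent ((Kᴴ * K).submatrix σ id) := by
    have h := hT _ hB
    have hleft : T * (1 : Matrix (Fin n) (Fin n) 𝕜).submatrix id c = K := by
      simpa using mul_submatrix_one (Equiv.refl _) c T
    have hright : (1 : Matrix (Fin n) (Fin n) 𝕜).submatrix (c ∘ σ) id * Tᴴ =
        Tᴴ.submatrix (c ∘ σ) id := by
      simpa using one_submatrix_mul (c ∘ σ) (Equiv.refl _) Tᴴ
    rw [← Matrix.mul_assoc, Matrix.mul_assoc, hleft, hright] at h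
    convert isNilpotent_mul_comm h using 1
    rw [conjTranspose_submatrix, ← submatrix_mul _ _ _ _ _ Function.bijective_id,
      submatrix_submatrix]
    rfl
  obtain ⟨m, hm⟩ := hnil
  have hdet : ((Kᴴ * K).submatrix σ id).det = 0 :=
    IsNilpotent.eq_zero ⟨m, by rw [← det_pow, hm, det_zero]⟩
  rw [det_permute, mul_eq_zero] at hdet
  exact hdet.elim (by simp) (det_conjTranspose_mul_self_ne_zero hK)

open scoped ComplexOrder in
theorem exists_not_hasCycleIn_of_nil_compression {𝕜 : Type*} [RCLike 𝕜] {n d : ℕ}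
    {E : Finset (Fin n × Fin n)} {T : Matrix (Fin d) (Fin n) 𝕜} (hT : T * Tᴴ = 1)
    (hnil : ∀ B ∈ graphSpace 𝕜 E, IsNilpotent (T * B * Tᴴ)) :
    ∃ V : Finset (Fin n), ¬ HasCycleIn E V ∧ V.card = d := by
  obtain ⟨V, hV, hcard⟩ := T.exists_finset_linearIndepOn_col_card_eq_rank
  refine ⟨V, not_hasCycleIn_of_linearIndepOn hnil hV, ?_⟩
  rw [hcard, ← rank_self_mul_conjTranspose, hT, Matrix.rank_one, Fintype.card_fin]

/-- The maximum number of vertices of an acyclic induced subgraph of `G` equals the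
largest dimension `d` of a subspace `U ≤ ℂ^n` such that the induced matrix space
`S_G[U] = { T_U B T_U* : B ∈ S_G }` is nil; such a `U` of dimension `d` is encoded
by a `d × n` matrix `T` with orthonormal rows (`T * Tᴴ = 1`) spanning `U`. -/
theorem stmt_10 (n : ℕ) (E : Finset (Fin n × Fin n)) :
    sSup {k : ℕ | ∃ V : Finset (Fin n), ¬ HasCycleIn E V ∧ V.card = k} =
      sSup {d : ℕ | ∃ T : Matrix (Fin d) (Fin n) ℂ, T * Tᴴ = 1 ∧
        ∀ B ∈ graphSpace ℂ E, IsNilpotent (T * B * Tᴴ)} := by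
  congr 1
  ext d
  constructor
  · rintro ⟨V, hV, rfl⟩
    exact exists_nil_compression_of_not_hasCycleIn hV
  · rintro ⟨T, hT, hnil⟩
    exact exists_not_hasCycleIn_of_nil_compression hT hnil
end

section
/- Let G = ([n], E) be a directed graph and S_G ≤ M(n, F) its graphical matrix space. Then the number of strongly connected components of G equals the length of any maximal chain 0 = U_0 < U_1 < ⋯ < U_k = F^n of invariant subspaces of S_G. -/
open Matrix

/-- There is a directed walk from `i` to `j` (possibly of length 0). -/
def Reach {n : ℕ} (E : Finset (Fin n × Fin n)) (i j : Fin n) : Prop :=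
  ∃ (k : ℕ) (v : ℕ → Fin n), v 0 = i ∧ v k = j ∧ ∀ l < k, (v l, v (l + 1)) ∈ E

/-- A subspace of row vectors is invariant under the matrix space `S`. -/
def MatSpaceInvariant {n : ℕ} (F : Type*) [Field F] (S : Submodule F (Matrix (Fin n) (Fin n) F))
    (U : Submodule F (Fin n → F)) : Prop :=
  ∀ B ∈ S, ∀ u ∈ U, Matrix.vecMul u B ∈ U

/-!
The invariant subspaces of `S_G` are closed under sums and intersections, so they form a
modular lattice and Jordan–Hölder makes all maximal chains equally long. A maximal chain of
length `c(G)` comes from numbering the strongly connected components in reverse topological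
order: the coordinate subspaces supported on the first `t` components are invariant because
arcs never lead back to an earlier component, and nothing invariant lies strictly between two
consecutive ones because inside a component a nonzero coordinate is carried along walks to
every other coordinate.
-/

section Modular

instance Sublattice.instIsModularLattice {α : Type*} [Lattice α] [IsModularLattice α]
    (L : Sublattice α) : IsModularLattice L :=
  ⟨fun {x y z} h => (sup_inf_le_assoc_of_le (y : α) h : ((x : α) ⊔ y) ⊓ z ≤ x ⊔ y ⊓ z)⟩

theorem Sublattice.covBy_iff {α : Type*} [Lattice α] {L : Sublattice α} {x y : L} :
    x ⋖ y ↔ (x : α) < y ∧ ∀ z ∈ L, (x : α) ≤ z → z ≤ y → z = x ∨ z = y := by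
  rw [covBy_iff_lt_and_eq_or_eq]
  refine ⟨fun ⟨hlt, h⟩ => ⟨hlt, fun z hz hxz hzy => ?_⟩,
    fun ⟨hlt, h⟩ => ⟨hlt, fun z hxz hzy => ?_⟩⟩
  · exact (h ⟨z, hz⟩ hxz hzy).imp (congrArg Subtype.val) (congrArg Subtype.val)
  · exact (h z z.2 hxz hzy).imp Subtype.ext Subtype.ext

/-- Jordan–Hölder for modular lattices, phrased for chains indexed by `Fin`. -/
theorem length_eq_of_covBy_chains {X : Type*} [Lattice X] [IsModularLattice X] {k m : ℕ}
    (f : Fin (k + 1) → X) (g : Fin (m + 1) → X)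
    (hf : ∀ i : Fin k, f i.castSucc ⋖ f i.succ) (hg : ∀ i : Fin m, g i.castSucc ⋖ g i.succ)
    (h0 : f 0 = g 0) (hlast : f (Fin.last k) = g (Fin.last m)) : k = m :=
  (CompositionSeries.jordan_holder ⟨k, f, hf⟩ ⟨m, g, hg⟩ h0 hlast).length_eq

theorem exists_antitone_equiv_fin (α : Type*) [PartialOrder α] [Finite α] :
    ∃ e : α ≃ Fin (Nat.card α), Antitone e := by
  have : Finite (LinearExtension αᵒᵈ) := inferInstanceAs (Finite α)
  have : Fintype (LinearExtension αᵒᵈ) := Fintype.ofFinite _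
  let e := (monoEquivOfFin (LinearExtension αᵒᵈ) Nat.card_eq_fintype_card.symm).symm
  refine ⟨(e.toEquiv : α ≃ Fin (Nat.card α)), fun a b hab => ?_⟩
  exact e.monotone (toLinearExtension.monotone (α := αᵒᵈ) hab)

end Modular

section CoordSubspace

variable {F : Type*} [Field F] {ι : Type*}

variable (F) in
def coordSubspace (s : Set ι) : Submodule F (ι → F) where
  carrier := {u | ∀ i ∉ s, u i = 0}
  add_mem' hu hv i hi := by simp [hu i hi, hv i hi]
  zero_mem' _ _ := rfl
  smul_mem' c u hu i hi := by simp [hu i hi]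

theorem mem_coordSubspace {s : Set ι} {u : ι → F} :
    u ∈ coordSubspace F s ↔ ∀ i ∉ s, u i = 0 :=
  Iff.rfl

variable [DecidableEq ι]

theorem single_mem_coordSubspace {s : Set ι} {j : ι} (hj : j ∈ s) (c : F) :
    Pi.single j c ∈ coordSubspace F s := fun i hi => by
  simp [(ne_of_mem_of_not_mem hj hi).symm]

theorem single_mem_of_single_mem {W : Submodule F (ι → F)} {j : ι} {c : F} (hc : c ≠ 0)
    (h : Pi.single j c ∈ W) (d : F) : Pi.single j d ∈ W := by
  simpa [← Pi.single_smul', smul_eq_mul, div_mul_cancel₀ d hc] using W.smul_mem (d / c) h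

variable [Fintype ι]

theorem coordSubspace_le_of_single_mem {s : Set ι} {W : Submodule F (ι → F)}
    (h : ∀ j ∈ s, Pi.single j 1 ∈ W) : coordSubspace F s ≤ W := by
  intro u hu
  rw [← Finset.univ_sum_single u]
  refine W.sum_mem fun j _ => ?_
  by_cases hj : j ∈ s
  · simpa [← Pi.single_smul'] using W.smul_mem (u j) (h j hj)
  · simp [hu j hj]

theorem single_mem_of_forall_ne {W : Submodule F (ι → F)} {w : ι → F} (hw : w ∈ W) (i : ι)
    (h : ∀ j ≠ i, Pi.single j (w j) ∈ W) : Pi.single i (w i) ∈ W := by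
  have hsum : w = Pi.single i (w i) + ∑ j ∈ Finset.univ.erase i, Pi.single j (w j) := by
    rw [Finset.add_sum_erase _ (fun j => Pi.single j (w j)) (Finset.mem_univ i),
      Finset.univ_sum_single]
  rw [hsum] at hw
  exact (W.add_mem_iff_left (W.sum_mem fun j hj => h j (Finset.ne_of_mem_erase hj))).1 hw

end CoordSubspace

section Graph

variable {n : ℕ} {E : Finset (Fin n × Fin n)}

theorem reach_iff_reflTransGen {i j : Fin n} :
    Reach E i j ↔ Relation.ReflTransGen (fun a b => (a, b) ∈ E) i j := by
  constructor
  · rintro ⟨k, v, rfl, rfl, hv⟩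
    induction k with
    | zero => rfl
    | succ k ih => exact (ih fun l hl => hv l (by omega)).tail (hv k k.lt_succ_self)
  · intro h
    induction h with
    | refl => exact ⟨0, fun _ => i, rfl, rfl, by simp⟩
    | @tail b c _ hbc ih =>
      obtain ⟨k, v, h0, hk, hv⟩ := ih
      refine ⟨k + 1, fun l => if l ≤ k then v l else c, by simp [h0], by simp, fun l hl => ?_⟩
      rcases Nat.lt_or_eq_of_le (Nat.le_of_lt_succ hl) with hl | rfl
      · simpa [hl.le, Nat.succ_le_of_lt hl] using hv l hl
      · simpa [hk] using hbc

/-- `Antisymmetrization (ReachOrder E) (· ≤ ·)` is definitionally the quotient by mutual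
reachability, i.e. the type of strongly connected components. -/
def ReachOrder (_E : Finset (Fin n × Fin n)) : Type := Fin n

instance : Preorder (ReachOrder E) where
  le := Reach E
  le_refl _ := reach_iff_reflTransGen.2 .refl
  le_trans _ _ _ hij hjk :=
    reach_iff_reflTransGen.2 ((reach_iff_reflTransGen.1 hij).trans (reach_iff_reflTransGen.1 hjk))

instance : Finite (ReachOrder E) := inferInstanceAs (Finite (Fin n))

variable {F : Type*} [Field F]

theorem vecMul_single_one (u : Fin n → F) (i j : Fin n) :
    u ᵥ* Matrix.single i j 1 = Pi.single j (u i) := by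
  ext m
  by_cases hm : j = m <;> simp [Matrix.vecMul, dotProduct, Matrix.single_apply, hm]

theorem matSpaceInvariant_graphSpace_iff {U : Submodule F (Fin n → F)} :
    MatSpaceInvariant F (graphSpace F E) U ↔
      ∀ i j, (i, j) ∈ E → ∀ u ∈ U, Pi.single j (u i) ∈ U := by
  refine ⟨fun hU i j hij u hu => ?_, fun h B hB u hu => ?_⟩
  · simpa [vecMul_single_one] using hU _ (Submodule.subset_span ⟨(i, j), hij, rfl⟩) u hu
  induction hB using Submodule.span_induction with
  | mem B hB =>
    obtain ⟨⟨i, j⟩, hij, rfl⟩ := hB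
    simpa [vecMul_single_one] using h i j hij u hu
  | zero => simp
  | add B C _ _ hB hC => simpa [Matrix.vecMul_add] using U.add_mem hB hC
  | smul c B _ hB => simpa [Matrix.vecMul_smul] using U.smul_mem c hB

theorem single_mem_of_transGen {U : Submodule F (Fin n → F)}
    (hU : MatSpaceInvariant F (graphSpace F E) U) {i j : Fin n}
    (hij : Relation.TransGen (fun a b => (a, b) ∈ E) i j) {u : Fin n → F} (hu : u ∈ U) :
    Pi.single j (u i) ∈ U := by
  rw [matSpaceInvariant_graphSpace_iff] at hU
  induction hij with
  | single hij => exact hU _ _ hij u hu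
  | tail _ hbc ih => simpa using hU _ _ hbc _ ih

theorem coordSubspace_invariant {s : Set (Fin n)} (hs : ∀ i j, (i, j) ∈ E → i ∈ s → j ∈ s) :
    MatSpaceInvariant F (graphSpace F E) (coordSubspace F s) := by
  refine matSpaceInvariant_graphSpace_iff.2 fun i j hij u hu => ?_
  by_cases hi : i ∈ s
  · exact single_mem_coordSubspace (hs i j hij hi) _
  · simp [hu i hi]

/-- A vector of `W` outside `coordSubspace F s` has a nonzero coordinate in `t \ s`; walks
spread it to every coordinate of `t \ s`. -/
theorem eq_or_eq_of_coordSubspace_le_of_le {s t : Set (Fin n)}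
    (hconn : ∀ i ∈ t \ s, ∀ j ∈ t \ s, i ≠ j → Relation.TransGen (fun a b => (a, b) ∈ E) i j)
    {W : Submodule F (Fin n → F)} (hW : MatSpaceInvariant F (graphSpace F E) W)
    (hsW : coordSubspace F s ≤ W) (hWt : W ≤ coordSubspace F t) :
    W = coordSubspace F s ∨ W = coordSubspace F t := by
  by_contra! hne
  obtain ⟨w, hw, hws⟩ := SetLike.exists_of_lt (lt_of_le_of_ne hsW hne.1.symm)
  obtain ⟨i, his, hwi⟩ : ∃ i ∉ s, w i ≠ 0 := by simpa [mem_coordSubspace] using hws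
  have hit : i ∈ t := by_contra fun hit => hwi (hWt hw i hit)
  have hreach : ∀ j ∈ t \ s, j ≠ i → ∀ d, Pi.single j d ∈ W := fun j hj hji =>
    single_mem_of_single_mem hwi (single_mem_of_transGen hW (hconn i ⟨hit, his⟩ j hj hji.symm) hw)
  have hi : Pi.single i (1 : F) ∈ W := by
    refine single_mem_of_single_mem hwi (single_mem_of_forall_ne hw i fun j hji => ?_) 1
    by_cases hjs : j ∈ s
    · exact hsW (single_mem_coordSubspace hjs _)
    by_cases hjt : j ∈ t
    · exact hreach j ⟨hjt, hjs⟩ hji _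
    · simp [hWt hw j hjt]
  refine hne.2 (le_antisymm hWt (coordSubspace_le_of_single_mem fun j hjt => ?_))
  by_cases hjs : j ∈ s
  · exact hsW (single_mem_coordSubspace hjs 1)
  by_cases hji : j = i
  · exact hji ▸ hi
  · exact hreach j ⟨hjt, hjs⟩ hji 1

end Graph

section Chains

variable {F : Type*} [Field F] {n : ℕ}

variable (F) in
def invariantSublattice (S : Submodule F (Matrix (Fin n) (Fin n) F)) :
    Sublattice (Submodule F (Fin n → F)) where
  carrier := {U | MatSpaceInvariant F S U}
  supClosed' U hU V hV B hB u hu := by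
    obtain ⟨x, hx, y, hy, rfl⟩ := Submodule.mem_sup.1 hu
    rw [Matrix.add_vecMul]
    exact Submodule.add_mem_sup (hU B hB x hx) (hV B hB y hy)
  infClosed' U hU V hV B hB u hu := ⟨hU B hB u hu.1, hV B hB u hu.2⟩

variable {E : Finset (Fin n × Fin n)}

theorem exists_covBy_chain_of_level (level : Fin n → ℕ) {c : ℕ}
    (hrange : Set.range level = Set.Iio c)
    (hedge : ∀ i j, (i, j) ∈ E → level j ≤ level i)
    (hconn : ∀ i j, level i = level j → i ≠ j → Relation.TransGen (fun a b => (a, b) ∈ E) i j) :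
    ∃ V : Fin (c + 1) → invariantSublattice F (graphSpace F E),
      (V 0 : Submodule F (Fin n → F)) = ⊥ ∧ (V (Fin.last c) : Submodule F (Fin n → F)) = ⊤ ∧
        ∀ t : Fin c, V t.castSucc ⋖ V t.succ := by
  let V (t : ℕ) : invariantSublattice F (graphSpace F E) :=
    ⟨coordSubspace F {i | level i < t},
      coordSubspace_invariant fun i j hij hi => (hedge i j hij).trans_lt hi⟩
  refine ⟨fun t => V t, ?_, ?_, fun t => Sublattice.covBy_iff.2 ⟨?_, fun W hW hVW hWV => ?_⟩⟩
  · exact eq_bot_iff.2 fun u hu => funext fun i => hu i (Nat.not_lt_zero _)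
  · refine eq_top_iff.2 fun u _ i hi => absurd ?_ hi
    exact hrange.subset (Set.mem_range_self i)
  · obtain ⟨i, hi⟩ : (t : ℕ) ∈ Set.range level := hrange ▸ t.isLt
    refine lt_of_le_of_ne (fun u hu j hj => hu j fun hjt => hj (Nat.lt_succ_of_lt hjt)) ?_
    intro heq
    have hmem : Pi.single i (1 : F) ∈ (V t : Submodule F (Fin n → F)) :=
      heq ▸ single_mem_coordSubspace (by simp [hi]) 1
    simpa [hi] using hmem i
  · refine eq_or_eq_of_coordSubspace_le_of_le (fun i hi j hj hij => hconn i j ?_ hij) hW hVW hWV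
    simp only [Set.mem_sdiff, Set.mem_ofPred_eq, not_lt, Fin.val_succ, Fin.val_castSucc] at hi hj
    omega

end Chains

section Components

variable {n : ℕ}

/-- Numbering the strongly connected components along a reverse topological order. -/
theorem exists_level_of_components (E : Finset (Fin n × Fin n)) :
    ∃ level : Fin n → ℕ,
      Set.range level = Set.Iio (Nat.card (Quot fun i j : Fin n => Reach E i j ∧ Reach E j i)) ∧
      (∀ i j, (i, j) ∈ E → level j ≤ level i) ∧
      ∀ i j, level i = level j → i ≠ j → Relation.TransGen (fun a b => (a, b) ∈ E) i j := by
  have : Finite (Antisymmetrization (ReachOrder E) (· ≤ ·)) := Quotient.finite _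
  obtain ⟨pos, hpos⟩ := exists_antitone_equiv_fin (Antisymmetrization (ReachOrder E) (· ≤ ·))
  let cls (i : Fin n) : Antisymmetrization (ReachOrder E) (· ≤ ·) :=
    toAntisymmetrization (α := ReachOrder E) (· ≤ ·) i
  refine ⟨fun i => pos (cls i), ?_, fun i j hij => ?_, fun i j hij hne => ?_⟩
  · ext t
    refine ⟨fun ⟨i, hi⟩ => hi ▸ (pos (cls i)).isLt, fun ht => ?_⟩
    obtain ⟨q, hq⟩ := pos.surjective ⟨t, ht⟩
    induction q using Antisymmetrization.ind with
    | _ i => exact ⟨i, congrArg Fin.val hq⟩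
  · exact hpos (toAntisymmetrization_mono (α := ReachOrder E)
      (reach_iff_reflTransGen.2 (.single hij)))
  · have hreach : Reach E i j := (Quotient.exact (pos.injective (Fin.ext hij))).1
    exact (Relation.reflTransGen_iff_eq_or_transGen.1 (reach_iff_reflTransGen.1 hreach)).resolve_left
      hne.symm

end Components

/-- The number of strongly connected components of `G` (classes of the mutual-reachability
relation) equals the length of any maximal chain `0 = U_0 < U_1 < ⋯ < U_k = F^n` of
invariant subspaces of `S_G`, where maximality means no invariant subspace lies strictly
between two consecutive members of the chain. -/
theorem stmt_12 (F : Type*) [Field F] (n : ℕ) (E : Finset (Fin n × Fin n))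
    (k : ℕ) (U : Fin (k + 1) → Submodule F (Fin n → F))
    (hmono : StrictMono U) (hbot : U 0 = ⊥) (htop : U (Fin.last k) = ⊤)
    (hinv : ∀ i, MatSpaceInvariant F (graphSpace F E) (U i))
    (hmax : ∀ (i : Fin k) (W : Submodule F (Fin n → F)),
      MatSpaceInvariant F (graphSpace F E) W → U i.castSucc ≤ W → W ≤ U i.succ →
        W = U i.castSucc ∨ W = U i.succ) :
    Nat.card (Quot fun i j : Fin n => Reach E i j ∧ Reach E j i) = k := by
  obtain ⟨level, hrange, hedge, hconn⟩ := exists_level_of_components E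
  obtain ⟨V, hV0, hVlast, hVcov⟩ := exists_covBy_chain_of_level (F := F) level hrange hedge hconn
  let U' (i : Fin (k + 1)) : invariantSublattice F (graphSpace F E) := ⟨U i, hinv i⟩
  have hUcov (i : Fin k) : U' i.castSucc ⋖ U' i.succ :=
    Sublattice.covBy_iff.2 ⟨hmono i.castSucc_lt_succ, hmax i⟩
  exact length_eq_of_covBy_chains V U' hVcov hUcov (Subtype.ext (hV0.trans hbot.symm))
    (Subtype.ext (hVlast.trans htop.symm))
end

section
/- Let F be a field with |F| > 2 and let G = ([n], E) be a vertex-transitive directed graph. Then the subgroup of GL(n, F) generated by the permutation matrices of automorphisms of G together with all invertible diagonal matrices is an irreducible matrix group; consequently the graphical matrix space S_G is both conjugacy irreducible and congruence irreducible. -/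
/-!
Invariance under the invertible diagonal matrices forces a nonzero invariant subspace `U` to
contain a standard basis vector `e_k`: if `u ∈ U` has `u k ≠ 0`, scaling the `k`-th coordinate by
some `x ∉ {0, 1}` and subtracting `u` leaves a nonzero multiple of `e_k`. Vertex-transitivity moves
`e_k` to every `e_j`, so `U` is everything. Both stabilisers of `S_G` contain these generators,
because `S_G` is the space of matrices supported on `E`, and permuting rows and columns by an
automorphism, or rescaling them, preserves that support.
-/

open Matrix

/-- `σ` is an automorphism of the directed graph with arc set `E`. -/
def IsGraphAut {n : ℕ} (E : Finset (Fin n × Fin n)) (σ : Equiv.Perm (Fin n)) : Prop :=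
  ∀ i j : Fin n, (i, j) ∈ E ↔ (σ i, σ j) ∈ E

/-- A set of invertible matrices is irreducible if the only subspaces of `F^n`
(row vectors, acted on from the right) invariant under all its elements are `0` and
`F^n`. -/
def IrreducibleMatSet {n : ℕ} {F : Type*} [Field F]
    (G : Set (Matrix (Fin n) (Fin n) F)ˣ) : Prop :=
  ∀ U : Submodule F (Fin n → F),
    (∀ A ∈ G, ∀ u ∈ U, Matrix.vecMul u (A : Matrix (Fin n) (Fin n) F) ∈ U) →
      U = ⊥ ∨ U = ⊤

section GraphSpace

variable {F : Type*} [Field F] {n : ℕ} {E : Finset (Fin n × Fin n)}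

theorem mem_graphSpace_iff {B : Matrix (Fin n) (Fin n) F} :
    B ∈ graphSpace F E ↔ ∀ i j, (i, j) ∉ E → B i j = 0 := by
  constructor
  · intro hB
    induction hB using Submodule.span_induction with
    | mem x hx =>
      obtain ⟨⟨k, l⟩, hkl, rfl⟩ := hx
      intro i j hij
      show single k l (1 : F) i j = 0
      apply single_apply_of_ne
      rintro ⟨rfl, rfl⟩
      exact hij hkl
    | zero => simp
    | add x y _ _ hx hy => intro i j hij; simp [hx i j hij, hy i j hij]
    | smul a x _ hx => intro i j hij; simp [hx i j hij]
  · intro hB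
    rw [B.matrix_eq_sum_single]
    refine Submodule.sum_mem _ fun i _ => Submodule.sum_mem _ fun j _ => ?_
    by_cases hij : (i, j) ∈ E
    · rw [← mul_one (B i j), ← smul_eq_mul, ← smul_single]
      exact Submodule.smul_mem _ _ (Submodule.subset_span ⟨(i, j), hij, rfl⟩)
    · simp [hB i j hij]

theorem submatrix_mem_graphSpace_iff {σ : Equiv.Perm (Fin n)} (hσ : IsGraphAut E σ)
    {B : Matrix (Fin n) (Fin n) F} :
    B.submatrix σ σ ∈ graphSpace F E ↔ B ∈ graphSpace F E := by
  simp only [mem_graphSpace_iff, submatrix_apply]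
  refine ⟨fun h i j hij => ?_, fun h i j hij => h _ _ (by rwa [← hσ])⟩
  simpa using h (σ.symm i) (σ.symm j) (by rwa [hσ, σ.apply_symm_apply, σ.apply_symm_apply])

theorem diagonal_mul_mul_diagonal_mem_graphSpace_iff {d e : Fin n → F} (hd : ∀ i, d i ≠ 0)
    (he : ∀ j, e j ≠ 0) {B : Matrix (Fin n) (Fin n) F} :
    diagonal d * B * diagonal e ∈ graphSpace F E ↔ B ∈ graphSpace F E := by
  simp only [mem_graphSpace_iff, mul_diagonal, diagonal_mul, mul_eq_zero, hd, he, false_or,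
    or_false]

end GraphSpace

section Units

variable {m R : Type*} [Fintype m] [DecidableEq m]

theorem permMatrix_mul_mul_permMatrix_inv [NonAssocSemiring R] (σ : Equiv.Perm m)
    (B : Matrix m m R) : σ.permMatrix R * B * σ⁻¹.permMatrix R = B.submatrix σ σ := by
  rw [PEquiv.toMatrix_toPEquiv_mul, PEquiv.mul_toMatrix_toPEquiv]
  rfl

theorem val_inv_of_val_eq_permMatrix [Semiring R] {σ : Equiv.Perm m} {T : (Matrix m m R)ˣ}
    (hT : (T : Matrix m m R) = σ.permMatrix R) : ((T⁻¹ : (Matrix m m R)ˣ) : Matrix m m R) =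
      σ⁻¹.permMatrix R :=
  Units.inv_eq_of_mul_eq_one_right (by rw [hT, ← permMatrix_mul, inv_mul_cancel, permMatrix_one])

theorem val_inv_of_val_eq_diagonal [Semiring R] {d : m → Rˣ} {T : (Matrix m m R)ˣ}
    (hT : (T : Matrix m m R) = diagonal (fun i => (d i : R))) :
    ((T⁻¹ : (Matrix m m R)ˣ) : Matrix m m R) = diagonal (fun i => (((d i)⁻¹ : Rˣ) : R)) :=
  Units.inv_eq_of_mul_eq_one_right (by simp [hT, diagonal_mul_diagonal])

end Units

section Conjugation

variable {F : Type*} [Field F] {n : ℕ} {E : Finset (Fin n × Fin n)}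
  {T : (Matrix (Fin n) (Fin n) F)ˣ} (B : Matrix (Fin n) (Fin n) F)

theorem mem_graphSpace_iff_conj_mem_of_permMatrix {σ : Equiv.Perm (Fin n)}
    (hσ : IsGraphAut E σ)
    (hT : (T : Matrix (Fin n) (Fin n) F) = σ.permMatrix F) :
    B ∈ graphSpace F E ↔
      (T : Matrix (Fin n) (Fin n) F) * B * ((T⁻¹ : (Matrix (Fin n) (Fin n) F)ˣ) :
        Matrix (Fin n) (Fin n) F) ∈ graphSpace F E := by
  rw [hT, val_inv_of_val_eq_permMatrix hT, permMatrix_mul_mul_permMatrix_inv,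
    submatrix_mem_graphSpace_iff hσ]

theorem mem_graphSpace_iff_congruence_mem_of_permMatrix {σ : Equiv.Perm (Fin n)}
    (hσ : IsGraphAut E σ)
    (hT : (T : Matrix (Fin n) (Fin n) F) = σ.permMatrix F) :
    B ∈ graphSpace F E ↔
      (T : Matrix (Fin n) (Fin n) F) * B * (T : Matrix (Fin n) (Fin n) F)ᵀ ∈ graphSpace F E := by
  rw [hT, transpose_permMatrix, permMatrix_mul_mul_permMatrix_inv,
    submatrix_mem_graphSpace_iff hσ]

theorem mem_graphSpace_iff_conj_mem_of_diagonal {d : Fin n → Fˣ}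
    (hT : (T : Matrix (Fin n) (Fin n) F) = diagonal (fun i => (d i : F))) :
    B ∈ graphSpace F E ↔
      (T : Matrix (Fin n) (Fin n) F) * B * ((T⁻¹ : (Matrix (Fin n) (Fin n) F)ˣ) :
        Matrix (Fin n) (Fin n) F) ∈ graphSpace F E := by
  rw [hT, val_inv_of_val_eq_diagonal hT,
    diagonal_mul_mul_diagonal_mem_graphSpace_iff (fun i => (d i).ne_zero) fun i => (d i)⁻¹.ne_zero]

theorem mem_graphSpace_iff_congruence_mem_of_diagonal {d : Fin n → Fˣ}
    (hT : (T : Matrix (Fin n) (Fin n) F) = diagonal (fun i => (d i : F))) :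
    B ∈ graphSpace F E ↔
      (T : Matrix (Fin n) (Fin n) F) * B * (T : Matrix (Fin n) (Fin n) F)ᵀ ∈ graphSpace F E := by
  rw [hT, diagonal_transpose,
    diagonal_mul_mul_diagonal_mem_graphSpace_iff (fun i => (d i).ne_zero) fun i => (d i).ne_zero]

end Conjugation

section Irreducible

variable {F m : Type*} [Field F] [Fintype m] [DecidableEq m] {U : Submodule F (m → F)}

theorem IrreducibleMatSet.mono {n : ℕ} {S T : Set (Matrix (Fin n) (Fin n) F)ˣ} (hST : S ⊆ T)
    (hS : IrreducibleMatSet S) : IrreducibleMatSet T :=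
  fun U hU => hS U fun A hA => hU A (hST hA)

theorem single_mem_of_diagonal_invariant (hF : ∃ x : F, x ≠ 0 ∧ x ≠ 1)
    (hU : ∀ d : m → Fˣ, ∀ u ∈ U, u ᵥ* diagonal (fun i => (d i : F)) ∈ U) {u : m → F}
    (hu : u ∈ U) {k : m} (hk : u k ≠ 0) : Pi.single k 1 ∈ U := by
  obtain ⟨x, hx0, hx1⟩ := hF
  set d : m → Fˣ := Function.update 1 k (Units.mk0 x hx0)
  have hdiff : u ᵥ* diagonal (fun i => (d i : F)) - u = (u k * (x - 1)) • Pi.single k 1 := by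
    funext j
    rcases eq_or_ne j k with rfl | hj
    · simp [d, vecMul_diagonal, mul_sub]
    · simp [d, vecMul_diagonal, hj]
  have hc : u k * (x - 1) ≠ 0 := mul_ne_zero hk (sub_ne_zero.mpr hx1)
  have hmem := U.smul_mem (u k * (x - 1))⁻¹ (U.sub_mem (hU d u hu) hu)
  rwa [hdiff, smul_smul, inv_mul_cancel₀ hc, one_smul] at hmem

theorem single_mem_of_permMatrix_invariant {σ : Equiv.Perm m}
    (hU : ∀ u ∈ U, u ᵥ* σ.permMatrix F ∈ U) {k : m} (hk : Pi.single k 1 ∈ U) :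
    Pi.single (σ k) 1 ∈ U := by
  simpa [vecMul_permMatrix, Pi.single_comp_equiv] using hU _ hk

theorem eq_top_of_forall_single_mem (hU : ∀ j : m, Pi.single j 1 ∈ U) : U = ⊤ := by
  rw [eq_top_iff, ← (Pi.basisFun F m).span_eq, Submodule.span_le]
  rintro _ ⟨j, rfl⟩
  simpa using hU j

end Irreducible

section Main

variable (F : Type*) [Field F] {n : ℕ} (E : Finset (Fin n × Fin n))

def autDiagonalGenerators : Set (Matrix (Fin n) (Fin n) F)ˣ :=
  {P | ∃ σ : Equiv.Perm (Fin n), IsGraphAut E σ ∧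
      (P : Matrix (Fin n) (Fin n) F) = σ.permMatrix F} ∪
    {D | ∃ d : Fin n → Fˣ,
      (D : Matrix (Fin n) (Fin n) F) = Matrix.diagonal (fun i => (d i : F))}

variable {F E}

theorem irreducibleMatSet_autDiagonalGenerators (hF : ∃ x : F, x ≠ 0 ∧ x ≠ 1)
    (htrans : ∀ i j : Fin n, ∃ σ : Equiv.Perm (Fin n), IsGraphAut E σ ∧ σ i = j) :
    IrreducibleMatSet (autDiagonalGenerators F E) := by
  intro U hU
  refine or_iff_not_imp_left.2 fun hU0 => ?_
  obtain ⟨u, hu, hu0⟩ := U.exists_mem_ne_zero_of_ne_bot hU0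
  obtain ⟨k, hk⟩ := Function.ne_iff.mp hu0
  have hdiag (d : Fin n → Fˣ) : ∀ u ∈ U, u ᵥ* diagonal (fun i => (d i : F)) ∈ U :=
    hU ⟨diagonal (fun i => (d i : F)), diagonal (fun i => ((d i)⁻¹ : Fˣ)), by simp, by simp⟩
      (Or.inr ⟨d, rfl⟩)
  have hperm (σ : Equiv.Perm (Fin n)) (hσ : IsGraphAut E σ) :
      ∀ u ∈ U, u ᵥ* σ.permMatrix F ∈ U :=
    hU ⟨σ.permMatrix F, σ⁻¹.permMatrix F,
      by rw [← permMatrix_mul, inv_mul_cancel, permMatrix_one],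
      by rw [← permMatrix_mul, mul_inv_cancel, permMatrix_one]⟩ (Or.inl ⟨σ, hσ, rfl⟩)
  have hk1 : Pi.single k 1 ∈ U := single_mem_of_diagonal_invariant hF hdiag hu hk
  refine eq_top_of_forall_single_mem fun j => ?_
  obtain ⟨σ, hσ, rfl⟩ := htrans k j
  exact single_mem_of_permMatrix_invariant (hperm σ hσ) hk1

end Main

theorem stmt_17 (F : Type*) [Field F] (hF : ∃ x : F, x ≠ 0 ∧ x ≠ 1)
    (n : ℕ) (E : Finset (Fin n × Fin n))
    (htrans : ∀ i j : Fin n, ∃ σ : Equiv.Perm (Fin n), IsGraphAut E σ ∧ σ i = j) :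
    IrreducibleMatSet (F := F) (n := n)
      ((Subgroup.closure
        (({P | ∃ σ : Equiv.Perm (Fin n), IsGraphAut E σ ∧
            (P : Matrix (Fin n) (Fin n) F) = σ.permMatrix F} ∪
         {D | ∃ d : Fin n → Fˣ,
            (D : Matrix (Fin n) (Fin n) F) = Matrix.diagonal (fun i => (d i : F))}
          : Set (Matrix (Fin n) (Fin n) F)ˣ)) : Subgroup (Matrix (Fin n) (Fin n) F)ˣ) :
            Set (Matrix (Fin n) (Fin n) F)ˣ) ∧
    -- `S_G` is conjugacy irreducible
    IrreducibleMatSet (F := F) (n := n)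
      {T | ∀ B : Matrix (Fin n) (Fin n) F,
        B ∈ graphSpace F E ↔
          (T : Matrix (Fin n) (Fin n) F) * B * ((T⁻¹ : (Matrix (Fin n) (Fin n) F)ˣ) :
            Matrix (Fin n) (Fin n) F) ∈ graphSpace F E} ∧
    -- `S_G` is congruence irreducible
    IrreducibleMatSet (F := F) (n := n)
      {T | ∀ B : Matrix (Fin n) (Fin n) F,
        B ∈ graphSpace F E ↔
          (T : Matrix (Fin n) (Fin n) F) * B * (T : Matrix (Fin n) (Fin n) F)ᵀ ∈
            graphSpace F E} := by
  have hirr := irreducibleMatSet_autDiagonalGenerators hF htrans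
  refine ⟨hirr.mono Subgroup.subset_closure, hirr.mono ?_, hirr.mono ?_⟩
  · rintro T (⟨σ, hσ, hT⟩ | ⟨d, hT⟩) B
    exacts [mem_graphSpace_iff_conj_mem_of_permMatrix B hσ hT,
      mem_graphSpace_iff_conj_mem_of_diagonal B hT]
  · rintro T (⟨σ, hσ, hT⟩ | ⟨d, hT⟩) B
    exacts [mem_graphSpace_iff_congruence_mem_of_permMatrix B hσ hT,
      mem_graphSpace_iff_congruence_mem_of_diagonal B hT]
end
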